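/- arXiv:0905.3374 — 5 statements merged into one kernel-verified Lean document; each statement's English description precedes it below -/
import Mathlib

section
/- Let (X, ◁) be a quandle, ρ : X → X a good involution, A an abelian group, and φ : X × X → A a symmetric quandle 2-cocycle, i.e. φ satisfies: φ(x,x) = 0; φ(x₁,x₂) − φ(x₁,x₃) − φ(x₁ ◁ x₂, x₃) + φ(x₁ ◁ x₃, x₂ ◁ x₃) = 0; φ(x₁,x₂) + φ(ρ(x₁),x₂) = 0; φ(x₁,x₂) + φ(x₁ ◁ x₂, ρ(x₂)) = 0. Define on X × A the operation (x,a) ◁ (y,b) = (x ◁ y, a + φ(x,y)) and ρ̃(x,a) = (ρ(x), −a). Then (X × A, ◁) is a quandle and ρ̃ is a good involution on it. -/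
/-- Extension of a symmetric quandle `(X, ρ)` by a symmetric quandle 2-cocycle
`φ : X × X → A`: the operation `(x,a) ◁ (y,b) = (x ◁ y, a + φ(x,y))` makes `X × A`
a quandle and `ρ̃(x,a) = (ρ x, −a)` a good involution on it. -/
theorem symmetric_quandle_extension {X A : Type*} [AddCommGroup A]
    (op : X → X → X) (ρ : X → X)
    (hidem : ∀ x, op x x = x)
    (hbij : ∀ y, Function.Bijective (fun x => op x y))
    (hdist : ∀ x y z, op (op x y) z = op (op x z) (op y z))
    (hρ2 : Function.Involutive ρ)
    (hρeq : ∀ x y, ρ (op x y) = op (ρ x) y)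
    (hρinv : ∀ x y, op (op x (ρ y)) y = x)
    (φ : X → X → A)
    (hφ1 : ∀ x, φ x x = 0)
    (hφ2 : ∀ x₁ x₂ x₃, φ x₁ x₂ - φ x₁ x₃ - φ (op x₁ x₂) x₃ + φ (op x₁ x₃) (op x₂ x₃) = 0)
    (hφ3 : ∀ x₁ x₂, φ x₁ x₂ + φ (ρ x₁) x₂ = 0)
    (hφ4 : ∀ x₁ x₂, φ x₁ x₂ + φ (op x₁ x₂) (ρ x₂) = 0) :
    let opE : X × A → X × A → X × A := fun p q => (op p.1 q.1, p.2 + φ p.1 q.1)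
    let ρE : X × A → X × A := fun p => (ρ p.1, -p.2)
    (∀ p, opE p p = p) ∧
    (∀ q, Function.Bijective (fun p => opE p q)) ∧
    (∀ p q r, opE (opE p q) r = opE (opE p r) (opE q r)) ∧
    Function.Involutive ρE ∧
    (∀ p q, ρE (opE p q) = opE (ρE p) q) ∧
    (∀ p q, opE (opE p (ρE q)) q = p) := by
  intro opE ρE
  have h2 : ∀ a b : X, φ a b + φ a b = 0 := by
    intro a b
    have h := hφ2 a a b
    rw [hidem, hφ1, hφ1] at h
    linear_combination (norm := abel) -h
  refine ⟨?_, ?_, ?_, ?_, ?_, ?_⟩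
  · rintro ⟨x, a⟩
    simp [opE, hidem, hφ1]
  · rintro ⟨y, b⟩
    constructor
    · rintro ⟨x, a⟩ ⟨x', a'⟩ h
      simp only [opE, Prod.mk.injEq] at h
      have hx : x = x' := (hbij y).1 h.1
      subst hx
      have ha : a = a' := by
        have h2' := h.2
        exact add_right_cancel h2'
      simp [ha]
    · rintro ⟨z, c⟩
      obtain ⟨x, hx⟩ := (hbij y).2 z
      exact ⟨(x, c - φ x y), by simp [opE, hx]⟩
  · rintro ⟨x, a⟩ ⟨y, b⟩ ⟨z, c⟩
    simp only [opE, Prod.mk.injEq]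
    refine ⟨hdist x y z, ?_⟩
    linear_combination (norm := abel) hφ2 x y z + h2 (op x y) z - h2 (op x z) (op y z)
  · rintro ⟨x, a⟩
    simp [ρE, hρ2 x]
  · rintro ⟨x, a⟩ ⟨y, b⟩
    simp only [ρE, opE, Prod.mk.injEq]
    refine ⟨hρeq x y, ?_⟩
    linear_combination (norm := abel) -hφ3 x y
  · rintro ⟨x, a⟩ ⟨y, b⟩
    simp only [ρE, opE, Prod.mk.injEq]
    refine ⟨hρinv x y, ?_⟩
    have h4 := hφ4 x (ρ y)
    rw [hρ2 y] at h4
    linear_combination (norm := abel) h4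
end

section
/- Let G_{2n+1} be as above, generated by a and b. Then the kernel of the homomorphism f : G_{2n+1} → D_{2(2n+1)} obtained by taking absolute values of matrix entries equals the set of diagonal sign matrices with determinant 1, i.e. diagonal matrices diag(ε₁,…,ε_{2n+1}) with ε_i = ±1 and ∏ε_i = 1; moreover f is surjective, sending a to a reflection and b to a rotation. -/
/-- The signed permutation matrix `a = (1, 2n+1, 2n, …, n+2, −(n+1), …, −3, −2)`
(column `j` is `ε_j e_{σ(j)}`), written with 0-based indices. -/
def Amat (n : ℕ) : Matrix (Fin (2*n+1)) (Fin (2*n+1)) ℤ := fun i j =>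
  if (j : ℕ) = 0 then (if (i : ℕ) = 0 then 1 else 0)
  else if (i : ℕ) = 2*n+1 - (j : ℕ) then (if (j : ℕ) ≤ n then 1 else -1) else 0

/-- The cyclic permutation matrix `b = (2n+1, 1, 2, …, 2n)`, with 0-based indices:
column `j` is `e_{j-1 (mod 2n+1)}`. -/
def Bmat (n : ℕ) : Matrix (Fin (2*n+1)) (Fin (2*n+1)) ℤ := fun i j =>
  if i = j - 1 then 1 else 0

/-!
Both generators are signed permutation matrices: `a` has pattern `j ↦ -j` and `b` has pattern
`j ↦ j - 1` on the indices `ℤ/(2n+1)`, i.e. the reflection `sr 0` and the rotation `r 1` of the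
`(2n+1)`-gon. A product of signed permutation matrices has a single nonzero entry `±1` in each
column, at the position given by the composite pattern, so taking absolute values is a
homomorphism on the group they generate; it lands in the dihedral group, which acts faithfully on
the vertices since `2n+1 ≥ 3`. Its kernel consists of the signed permutation matrices with trivial
pattern, i.e. the diagonal `±1` matrices, whose determinant is the product of the diagonal.
-/

open Equiv Function Matrix

namespace Matrix.SpecialLinearGroup

variable {ι R : Type*} [Fintype ι] [DecidableEq ι] [CommRing R]

lemma coe_inv_eq_transpose {g : SpecialLinearGroup ι R} (hg : (g : Matrix ι ι R)ᵀ * g = 1) :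
    ((g⁻¹ : SpecialLinearGroup ι R) : Matrix ι ι R) = (g : Matrix ι ι R)ᵀ := by
  rw [inv_eq_of_mul_eq_one_left (a := transpose g) (Subtype.ext hg)]
  rfl

lemma prod_diag_eq_one_of_isDiag {g : SpecialLinearGroup ι R} (hg : (g : Matrix ι ι R).IsDiag) :
    ∏ i, (g : Matrix ι ι R) i i = 1 := by
  simpa [det_diagonal] using congrArg det hg.diagonal_diag

end Matrix.SpecialLinearGroup

section SignedPerm

variable {ι : Type*} [DecidableEq ι]

def IsSignedPermMatrix (σ : Perm ι) (g : Matrix ι ι ℤ) : Prop :=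
  ∀ i j, |g i j| = if i = σ j then 1 else 0

namespace IsSignedPermMatrix

variable {σ τ : Perm ι} {g h : Matrix ι ι ℤ}

lemma apply_eq_zero (hg : IsSignedPermMatrix σ g) {i j : ι} (hij : i ≠ σ j) : g i j = 0 := by
  simpa [hij] using hg i j

lemma abs_apply_self (hg : IsSignedPermMatrix σ g) (j : ι) : |g (σ j) j| = 1 := by
  simpa using hg (σ j) j

lemma unique (hσ : IsSignedPermMatrix σ g) (hτ : IsSignedPermMatrix τ g) : σ = τ := by
  ext j
  by_contra hne
  have h := hσ.abs_apply_self j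
  rw [hτ.apply_eq_zero hne, abs_zero] at h
  exact zero_ne_one h

lemma one : IsSignedPermMatrix 1 (1 : Matrix ι ι ℤ) := by
  intro i j
  rcases eq_or_ne i j with rfl | hij <;> simp [*]

lemma mul_apply [Fintype ι] (hh : IsSignedPermMatrix τ h) (i k : ι) :
    (g * h) i k = g i (τ k) * h (τ k) k :=
  (Matrix.mul_apply).trans <| Fintype.sum_eq_single _ fun _ hj => by simp [hh.apply_eq_zero hj]

lemma mul [Fintype ι] (hg : IsSignedPermMatrix σ g) (hh : IsSignedPermMatrix τ h) :
    IsSignedPermMatrix (σ * τ) (g * h) := by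
  intro i k
  rw [hh.mul_apply, abs_mul, hg, hh.abs_apply_self, mul_one, Perm.mul_apply]

lemma transpose (hg : IsSignedPermMatrix σ g) : IsSignedPermMatrix σ⁻¹ gᵀ := by
  intro i j
  simp_rw [transpose_apply, hg j i, Perm.eq_inv_iff_eq, eq_comm]

lemma transpose_mul_self [Fintype ι] (hg : IsSignedPermMatrix σ g) : gᵀ * g = 1 := by
  ext i k
  rw [hg.mul_apply, transpose_apply]
  rcases eq_or_ne i k with rfl | hik
  · rw [← abs_mul_abs_self, hg.abs_apply_self, one_mul, one_apply_eq]
  · rw [hg.apply_eq_zero (σ.injective.ne hik).symm, zero_mul, one_apply_ne hik]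

end IsSignedPermMatrix

lemma isSignedPermMatrix_one_iff {g : Matrix ι ι ℤ} :
    IsSignedPermMatrix 1 g ↔ g.IsDiag ∧ ∀ i, g i i = 1 ∨ g i i = -1 := by
  refine ⟨fun hg => ⟨fun i j hij => hg.apply_eq_zero hij, fun i => ?_⟩,
    fun ⟨hdiag, hsign⟩ i j => ?_⟩
  · exact (abs_eq zero_le_one).1 (hg.abs_apply_self i)
  · rcases eq_or_ne i j with rfl | hij
    · simpa [abs_eq zero_le_one] using hsign i
    · simp [hdiag hij, hij]

lemma Matrix.SpecialLinearGroup.isSignedPermMatrix_one_iff [Fintype ι]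
    {g : SpecialLinearGroup ι ℤ} :
    IsSignedPermMatrix 1 (g : Matrix ι ι ℤ) ↔
      (∀ i j, i ≠ j → (g : Matrix ι ι ℤ) i j = 0) ∧
      (∀ i, (g : Matrix ι ι ℤ) i i = 1 ∨ (g : Matrix ι ι ℤ) i i = -1) ∧
      ∏ i, (g : Matrix ι ι ℤ) i i = 1 := by
  rw [_root_.isSignedPermMatrix_one_iff]
  exact ⟨fun ⟨hdiag, hsign⟩ => ⟨fun i j hij => hdiag hij, hsign,
      prod_diag_eq_one_of_isDiag hdiag⟩,
    fun ⟨hdiag, hsign, _⟩ => ⟨fun i j hij => hdiag i j hij, hsign⟩⟩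

end SignedPerm

section SignedPermSubgroup

variable {ι : Type*} [Fintype ι] [DecidableEq ι] {G : Type*} [Group G] (ρ : G →* Perm ι)

def signedPermSubgroup : Subgroup (SpecialLinearGroup ι ℤ) where
  carrier := {g | ∃ d, IsSignedPermMatrix (ρ d) g}
  one_mem' := ⟨1, by simpa using IsSignedPermMatrix.one⟩
  mul_mem' := by
    rintro _ _ ⟨d, hd⟩ ⟨e, he⟩
    exact ⟨d * e, by simpa using hd.mul he⟩
  inv_mem' := by
    rintro g ⟨d, hd⟩
    refine ⟨d⁻¹, ?_⟩
    rw [SpecialLinearGroup.coe_inv_eq_transpose hd.transpose_mul_self, map_inv]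
    exact hd.transpose

variable {ρ}

lemma mem_signedPermSubgroup {g : SpecialLinearGroup ι ℤ} :
    g ∈ signedPermSubgroup ρ ↔ ∃ d, IsSignedPermMatrix (ρ d) g :=
  Iff.rfl

namespace signedPermSubgroup

noncomputable def absHom (hρ : Injective ρ) : signedPermSubgroup ρ →* G where
  toFun g := (mem_signedPermSubgroup.1 g.2).choose
  map_one' := hρ <| (mem_signedPermSubgroup.1 (one_mem _)).choose_spec.unique <| by
    simpa using IsSignedPermMatrix.one
  map_mul' g h := hρ <| (mem_signedPermSubgroup.1 (g * h).2).choose_spec.unique <| by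
    simpa using (mem_signedPermSubgroup.1 g.2).choose_spec.mul
      (mem_signedPermSubgroup.1 h.2).choose_spec

lemma absHom_eq (hρ : Injective ρ) {g : signedPermSubgroup ρ} {d : G}
    (hd : IsSignedPermMatrix (ρ d) g) : absHom hρ g = d :=
  hρ <| (mem_signedPermSubgroup.1 g.2).choose_spec.unique hd

lemma absHom_eq_one_iff (hρ : Injective ρ) {g : signedPermSubgroup ρ} :
    absHom hρ g = 1 ↔ IsSignedPermMatrix 1 (g : Matrix ι ι ℤ) := by
  refine ⟨fun h => ?_, fun h => absHom_eq hρ (by rwa [map_one])⟩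
  obtain ⟨d, hd⟩ := g.2
  rwa [← absHom_eq hρ hd, h, map_one] at hd

end signedPermSubgroup

end SignedPermSubgroup

namespace DihedralGroup

variable {N : ℕ} {R : Type*} [AddCommGroup R]

-- Rotations act by `x ↦ x - ψ k`, so that `r 1` is the column shift `j ↦ j - 1` of `Bmat`.
def toPerm (ψ : ZMod N →+ R) : DihedralGroup N →* Perm R where
  toFun
    | r k => Equiv.subRight (ψ k)
    | sr k => Equiv.subLeft (ψ k)
  map_one' := Equiv.ext fun x => show x - ψ 0 = x by rw [map_zero, sub_zero]
  map_mul' := by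
    rintro (i | i) (j | j) <;> ext x <;>
      simp only [r_mul_r, r_mul_sr, sr_mul_r, sr_mul_sr, Perm.mul_apply, Equiv.subRight_apply,
        Equiv.subLeft_apply, map_add, map_sub] <;> abel

@[simp] lemma toPerm_r (ψ : ZMod N →+ R) (k : ZMod N) :
    toPerm ψ (r k) = Equiv.subRight (ψ k) := rfl

@[simp] lemma toPerm_sr (ψ : ZMod N →+ R) (k : ZMod N) :
    toPerm ψ (sr k) = Equiv.subLeft (ψ k) := rfl

lemma toPerm_injective {ψ : ZMod N →+ R} (hψ : Injective ψ) {y : R} (hy : y + y ≠ 0) :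
    Injective (toPerm ψ) := by
  have reflection_ne_rotation : ∀ i j, Equiv.subLeft (ψ i) ≠ Equiv.subRight (ψ j) := by
    intro i j h
    have h0 := congr($h 0)
    have hy' := congr($h y)
    simp only [Equiv.subLeft_apply, Equiv.subRight_apply] at h0 hy'
    apply hy
    calc y + y = (y - ψ j) - (ψ i - y) + ((ψ i - 0) - (0 - ψ j)) := by abel
      _ = 0 := by rw [hy', h0, sub_self, sub_self, add_zero]
  rintro (i | i) (j | j) h <;> simp only [toPerm_r, toPerm_sr] at h
  · simpa [hψ.eq_iff] using congr($h 0)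
  · exact absurd h.symm (reflection_ne_rotation j i)
  · exact absurd h (reflection_ne_rotation i j)
  · simpa [hψ.eq_iff] using congr($h 0)

lemma closure_sr_zero_r_one : Subgroup.closure {sr (0 : ZMod N), r 1} = ⊤ := by
  have hr : ∀ k : ZMod N, r k ∈ Subgroup.closure {sr (0 : ZMod N), r 1} := fun k => by
    have h1 : r 1 ∈ Subgroup.closure {sr (0 : ZMod N), r 1} :=
      Subgroup.subset_closure (Set.mem_insert_of_mem _ (Set.mem_singleton _))
    simpa [r_one_zpow] using zpow_mem h1 (ZMod.cast k : ℤ)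
  refine eq_top_iff.2 fun d _ => ?_
  rcases d with k | k
  · exact hr k
  · simpa using mul_mem (Subgroup.subset_closure (Set.mem_insert _ _)) (hr k)

end DihedralGroup

lemma isSignedPermMatrix_Amat (n : ℕ) : IsSignedPermMatrix (Equiv.neg _) (Amat n) := by
  intro i j
  simp only [Amat, Equiv.neg_apply, Fin.ext_iff, Fin.val_neg, Fin.val_zero]
  split_ifs <;> simp

lemma isSignedPermMatrix_Bmat (n : ℕ) : IsSignedPermMatrix (Equiv.subRight 1) (Bmat n) := by
  intro i j
  simp only [Bmat, Equiv.subRight_apply]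
  split_ifs <;> simp

lemma Fin.one_add_one_ne_zero_of_two_lt {N : ℕ} [NeZero N] (hN : 2 < N) :
    (1 : Fin N) + 1 ≠ 0 := by
  intro h
  have h2 := congrArg Fin.val h
  rw [Fin.val_add, Fin.val_one', Nat.mod_eq_of_lt (by omega : 1 < N), Nat.mod_eq_of_lt hN] at h2
  simp at h2

open DihedralGroup signedPermSubgroup

/-- The entry-wise absolute value homomorphism `f : G_{2n+1} → D_{2(2n+1)}` (identified
with the abstract dihedral group, sending `a` to the reflection `x = sr 0` and `b` to the
rotation `y = r 1`) is surjective and its kernel is exactly the set of diagonal sign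
matrices `diag(ε₁,…,ε_{2n+1})` with `ε_i = ±1` and `∏ ε_i = 1`. -/
theorem abs_hom_kernel (n : ℕ) (hn : 0 < n)
    (a b : Matrix.SpecialLinearGroup (Fin (2*n+1)) ℤ)
    (ha : (a : Matrix (Fin (2*n+1)) (Fin (2*n+1)) ℤ) = Amat n)
    (hb : (b : Matrix (Fin (2*n+1)) (Fin (2*n+1)) ℤ) = Bmat n) :
    ∃ f : ↥(Subgroup.closure {a, b}) →* DihedralGroup (2*n+1),
      Function.Surjective f ∧
      f ⟨a, Subgroup.subset_closure (Set.mem_insert _ _)⟩ = DihedralGroup.sr 0 ∧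
      f ⟨b, Subgroup.subset_closure (Set.mem_insert_of_mem _ rfl)⟩ = DihedralGroup.r 1 ∧
      ∀ g : ↥(Subgroup.closure {a, b}),
        f g = 1 ↔
          ((∀ i j : Fin (2*n+1), i ≠ j →
              ((g : Matrix.SpecialLinearGroup (Fin (2*n+1)) ℤ) :
                Matrix (Fin (2*n+1)) (Fin (2*n+1)) ℤ) i j = 0) ∧
            (∀ i : Fin (2*n+1),
              ((g : Matrix.SpecialLinearGroup (Fin (2*n+1)) ℤ) :
                Matrix (Fin (2*n+1)) (Fin (2*n+1)) ℤ) i i = 1 ∨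
              ((g : Matrix.SpecialLinearGroup (Fin (2*n+1)) ℤ) :
                Matrix (Fin (2*n+1)) (Fin (2*n+1)) ℤ) i i = -1) ∧
            (∏ i : Fin (2*n+1),
              ((g : Matrix.SpecialLinearGroup (Fin (2*n+1)) ℤ) :
                Matrix (Fin (2*n+1)) (Fin (2*n+1)) ℤ) i i) = 1) := by
  let ψ := (ZMod.finEquiv (2*n+1)).symm.toAddEquiv.toAddMonoidHom
  have hρ : Injective (toPerm ψ) := toPerm_injective (ZMod.finEquiv _).symm.injective
    (Fin.one_add_one_ne_zero_of_two_lt (by omega))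
  have hPa : IsSignedPermMatrix (toPerm ψ (sr 0)) a := by
    convert ha ▸ isSignedPermMatrix_Amat n
    ext x; simp [ψ]
  have hPb : IsSignedPermMatrix (toPerm ψ (r 1)) b := by
    convert hb ▸ isSignedPermMatrix_Bmat n
    ext x; simp [ψ]
  have hsub : Subgroup.closure {a, b} ≤ signedPermSubgroup (toPerm ψ) := by
    rw [Subgroup.closure_le]
    rintro _ (rfl | rfl)
    exacts [⟨_, hPa⟩, ⟨_, hPb⟩]
  let f := (absHom hρ).comp (Subgroup.inclusion hsub)
  have hfa : f ⟨a, Subgroup.subset_closure (Set.mem_insert _ _)⟩ = sr 0 :=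
    absHom_eq hρ (g := ⟨a, _⟩) hPa
  have hfb : f ⟨b, Subgroup.subset_closure (Set.mem_insert_of_mem _ rfl)⟩ = r 1 :=
    absHom_eq hρ (g := ⟨b, _⟩) hPb
  refine ⟨f, ?_, hfa, hfb, fun g => ?_⟩
  · rw [← MonoidHom.range_eq_top, eq_top_iff, ← closure_sr_zero_r_one, Subgroup.closure_le]
    rintro _ (rfl | rfl)
    exacts [⟨_, hfa⟩, ⟨_, hfb⟩]
  · exact (absHom_eq_one_iff hρ).trans Matrix.SpecialLinearGroup.isSignedPermMatrix_one_iff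
end

section
/- In G_{2n+1}, the centralizer C(a) of a = (1, 2n+1, 2n, …, n+2, −(n+1), …, −2) has order 2^{n+1}; explicitly it is generated by the elements (1, ε₂(2n+1), ε₃(2n), …, ε_{n+1}(n+2), −ε_{n+1}(n+1), …, −ε₂(2)) for ε_j = ±1. -/
/-!
`a` and `b` are signed permutation matrices over the permutations `j ↦ -j` and `j ↦ j - 1` of
`ℤ/(2n+1)`, so every element of `⟨a, b⟩` is a signed permutation matrix whose permutation is
dihedral. Commuting with `a` forces this permutation to commute with `j ↦ -j`, and since `2n+1`
is odd it is then the identity or `j ↦ -j`: every `c` in the centralizer is diagonal, or `c a⁻¹`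
is. Conversely, the conjugates of `a² = diag(1, -1, …, -1)` by powers of `b` generate all diagonal
sign matrices of determinant one. Hence the centralizer is `D ∪ D a`, where `D` is the group of
diagonal matrices with even sign vectors `δ(-j) = δ(j)`, `δ 0 = 1` (there are `2^n` of them), and
`D a` is exactly the given generating set.
-/

open Matrix

section Monomial

variable {ι R : Type*} [DecidableEq ι] [CommRing R]

-- The matrix written `(δ₁σ(1), …, δₘσ(m))` in the paper: its column `j` is `δ j • e (σ j)`.
def monomialMatrix (σ : Equiv.Perm ι) (δ : ι → Rˣ) : Matrix ι ι R :=
  of fun i j => if i = σ j then (δ j : R) else 0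

theorem monomialMatrix_mul [Fintype ι] (σ τ : Equiv.Perm ι) (δ ε : ι → Rˣ) :
    monomialMatrix σ δ * monomialMatrix τ ε = monomialMatrix (σ * τ) fun j => δ (τ j) * ε j := by
  ext i j
  rw [mul_apply, Finset.sum_eq_single (τ j)]
  · simp only [monomialMatrix, of_apply, ite_mul, zero_mul, if_true, Units.val_mul]
    rfl
  · intro k _ hk
    simp [monomialMatrix, hk]
  · simp

theorem monomialMatrix_one (δ : ι → Rˣ) : monomialMatrix 1 δ = diagonal fun j => (δ j : R) := by
  ext i j
  by_cases h : i = j <;> simp [monomialMatrix, h]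

theorem monomialMatrix_inj [Nontrivial R] {σ τ : Equiv.Perm ι} {δ ε : ι → Rˣ} :
    monomialMatrix σ δ = monomialMatrix τ ε ↔ σ = τ ∧ δ = ε := by
  refine ⟨fun h => ?_, fun h => h.1 ▸ h.2 ▸ rfl⟩
  have key : ∀ j, σ j = τ j ∧ δ j = ε j := by
    intro j
    have hj := congrFun (congrFun h (σ j)) j
    by_cases hs : σ j = τ j
    · simpa [monomialMatrix, hs, Units.val_inj] using hj
    · simp [monomialMatrix, hs] at hj
  exact ⟨Equiv.ext fun j => (key j).1, funext fun j => (key j).2⟩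

theorem monomialMatrix_one_commute_iff [Fintype ι] [Nontrivial R] (σ : Equiv.Perm ι)
    (α β : ι → Rˣ) :
    monomialMatrix 1 β * monomialMatrix σ α = monomialMatrix σ α * monomialMatrix 1 β ↔
      ∀ j, β (σ j) = β j := by
  simp [monomialMatrix_mul, monomialMatrix_inj, funext_iff, mul_comm]

end Monomial

namespace Matrix.SpecialLinearGroup

variable {ι R : Type*} [Fintype ι] [DecidableEq ι] [CommRing R]

theorem coe_inv_eq_of_mul_eq_one {g : SpecialLinearGroup ι R} {M : Matrix ι ι R}
    (h : (g : Matrix ι ι R) * M = 1) : ((g⁻¹ : SpecialLinearGroup ι R) : Matrix ι ι R) = M :=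
  left_inv_eq_right_inv (by rw [← coe_mul, inv_mul_cancel, coe_one]) h

theorem coe_inv_of_coe_eq_monomialMatrix {g : SpecialLinearGroup ι R} {σ : Equiv.Perm ι}
    {δ : ι → Rˣ} (h : (g : Matrix ι ι R) = monomialMatrix σ δ) :
    ((g⁻¹ : SpecialLinearGroup ι R) : Matrix ι ι R) =
      monomialMatrix σ⁻¹ fun j => (δ (σ⁻¹ j))⁻¹ := by
  apply coe_inv_eq_of_mul_eq_one
  rw [h, monomialMatrix_mul, mul_inv_cancel, monomialMatrix_one]
  simp

def monomialSubgroup (P : Subgroup (Equiv.Perm ι)) : Subgroup (SpecialLinearGroup ι R) where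
  carrier := {g | ∃ σ ∈ P, ∃ δ : ι → Rˣ, (g : Matrix ι ι R) = monomialMatrix σ δ}
  one_mem' := ⟨1, P.one_mem, 1, by simp [monomialMatrix_one]⟩
  mul_mem' := by
    rintro g h ⟨σ, hσ, δ, hg⟩ ⟨τ, hτ, ε, hh⟩
    exact ⟨σ * τ, P.mul_mem hσ hτ, _, by rw [coe_mul, hg, hh, monomialMatrix_mul]⟩
  inv_mem' := by
    rintro g ⟨σ, hσ, δ, hg⟩
    exact ⟨σ⁻¹, P.inv_mem hσ, _, coe_inv_of_coe_eq_monomialMatrix hg⟩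

def diagonalUnitsHom : (ι → Rˣ) →* GL ι R :=
  (Units.map (diagonalRingHom ι R).toMonoidHom).comp MulEquiv.piUnits.symm.toMonoidHom

@[simp]
theorem coe_diagonalUnitsHom (v : ι → Rˣ) :
    (diagonalUnitsHom v : Matrix ι ι R) = diagonal fun j => (v j : R) := rfl

def diagonalSubgroup : Subgroup (SpecialLinearGroup ι R) :=
  (diagonalUnitsHom (ι := ι) (R := R)).range.comap toGL

theorem mem_diagonalSubgroup {g : SpecialLinearGroup ι R} :
    g ∈ diagonalSubgroup ↔ ∃ v : ι → Rˣ, (g : Matrix ι ι R) = monomialMatrix 1 v := by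
  simp [diagonalSubgroup, Units.ext_iff, eq_comm, monomialMatrix_one]

def diagonalSigns (H : Subgroup (SpecialLinearGroup ι R)) : Subgroup (ι → Rˣ) :=
  (H.map toGL).comap diagonalUnitsHom

theorem mem_diagonalSigns {H : Subgroup (SpecialLinearGroup ι R)} {v : ι → Rˣ} :
    v ∈ diagonalSigns H ↔ ∃ g ∈ H, (g : Matrix ι ι R) = monomialMatrix 1 v := by
  simp [diagonalSigns, Units.ext_iff, monomialMatrix_one]

end Matrix.SpecialLinearGroup

theorem Fin.eq_zero_of_add_self_eq_zero {n : ℕ} (j : Fin (2 * n + 1)) (h : j + j = 0) : j = 0 := by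
  have h' := congrArg Fin.val h
  rw [Fin.val_add_eq_ite] at h'
  ext
  split_ifs at h' <;> simp at h' <;> omega

def signA (n : ℕ) (j : Fin (2 * n + 1)) : ℤˣ := if (j : ℕ) ≤ n then 1 else -1

theorem signA_zero {n : ℕ} : signA n 0 = 1 := by simp [signA]

theorem signA_neg {n : ℕ} {j : Fin (2 * n + 1)} (hj : j ≠ 0) : signA n (-j) = -signA n j := by
  have hj' : (j : ℕ) ≠ 0 := Fin.val_ne_zero_iff.2 hj
  have := j.isLt
  unfold signA
  rw [Fin.val_neg, if_neg hj]
  split_ifs <;> first | omega | simp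

theorem Amat_eq (n : ℕ) : Amat n = monomialMatrix (Equiv.neg _) (signA n) := by
  ext i j
  rcases eq_or_ne j 0 with rfl | hj
  · simp only [Amat, monomialMatrix, of_apply, Equiv.neg_apply, neg_zero, signA_zero, Fin.val_zero,
      if_true, Units.val_one, Fin.val_eq_zero_iff]
  · have hi : i = -j ↔ (i : ℕ) = 2 * n + 1 - j := by rw [Fin.ext_iff, Fin.val_neg, if_neg hj]
    simp only [Amat, monomialMatrix, of_apply, Equiv.neg_apply, Fin.val_ne_zero_iff.2 hj,
      if_false, ← hi, signA]
    split_ifs <;> simp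

theorem Bmat_eq (n : ℕ) : Bmat n = monomialMatrix (Equiv.subRight 1) 1 := by
  ext i j
  simp [Bmat, monomialMatrix]

section Dihedral

variable (G : Type*) [AddCommGroup G]

def dihedralPerms : Subgroup (Equiv.Perm G) where
  carrier := {σ | ∃ k, (∀ j, σ j = j + k) ∨ (∀ j, σ j = -j + k)}
  one_mem' := ⟨0, Or.inl fun j => (add_zero j).symm⟩
  mul_mem' := by
    rintro σ τ ⟨k, hσ | hσ⟩ ⟨l, hτ | hτ⟩
    · exact ⟨l + k, Or.inl fun j => by simp only [Equiv.Perm.mul_apply, hσ, hτ]; abel⟩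
    · exact ⟨l + k, Or.inr fun j => by simp only [Equiv.Perm.mul_apply, hσ, hτ]; abel⟩
    · exact ⟨-l + k, Or.inr fun j => by simp only [Equiv.Perm.mul_apply, hσ, hτ]; abel⟩
    · exact ⟨-l + k, Or.inl fun j => by simp only [Equiv.Perm.mul_apply, hσ, hτ]; abel⟩
  inv_mem' := by
    rintro σ ⟨k, hσ | hσ⟩
    · refine ⟨-k, Or.inl fun j => σ.injective ?_⟩
      rw [Equiv.Perm.coe_inv, Equiv.apply_symm_apply, hσ]; abel
    · refine ⟨k, Or.inr fun j => σ.injective ?_⟩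
      rw [Equiv.Perm.coe_inv, Equiv.apply_symm_apply, hσ]; abel

variable {G}

theorem neg_mem_dihedralPerms : Equiv.neg G ∈ dihedralPerms G :=
  ⟨0, Or.inr fun _ => (add_zero _).symm⟩

theorem subRight_mem_dihedralPerms (k : G) : Equiv.subRight k ∈ dihedralPerms G :=
  ⟨-k, Or.inl fun _ => sub_eq_add_neg _ k⟩

theorem eq_one_or_eq_neg_of_mem_dihedralPerms (h2 : ∀ j : G, j + j = 0 → j = 0)
    {σ : Equiv.Perm G} (hσ : σ ∈ dihedralPerms G) (hcomm : σ * Equiv.neg G = Equiv.neg G * σ) :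
    σ = 1 ∨ σ = Equiv.neg G := by
  obtain ⟨k, hσ | hσ⟩ := hσ <;>
  · have hk : k = 0 := by
      have h0 := Equiv.ext_iff.1 hcomm 0
      simp only [Equiv.Perm.mul_apply, Equiv.neg_apply, neg_zero, zero_add, hσ] at h0
      exact h2 k (eq_neg_iff_add_eq_zero.1 h0)
    simp [Equiv.ext_iff, hσ, hk]

end Dihedral

theorem prod_eq_apply_zero_of_even {G : Type*} [AddCommGroup G] [Fintype G] [DecidableEq G]
    (h2 : ∀ j : G, j + j = 0 → j = 0) {v : G → ℤˣ} (hv : ∀ j, v (-j) = v j) :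
    ∏ j, v j = v 0 := by
  rw [← Finset.mul_prod_erase _ _ (Finset.mem_univ 0), mul_eq_left]
  refine Finset.prod_involution (fun j _ => -j) (fun j _ => by rw [hv, Int.units_mul_self])
    (fun j hj _ hneg => (Finset.mem_erase.1 hj).1 (h2 j ?_)) (fun j hj => by simpa using hj)
    (fun j _ => neg_neg j)
  nth_rewrite 1 [← hneg]
  exact neg_add_cancel j

theorem det_monomialMatrix_one_of_even {G : Type*} [AddCommGroup G] [Fintype G] [DecidableEq G]
    (h2 : ∀ j : G, j + j = 0 → j = 0) {β : G → ℤˣ} (hβ : ∀ j, β (-j) = β j) :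
    (monomialMatrix 1 β).det = β 0 := by
  rw [monomialMatrix_one, Matrix.det_diagonal, ← Units.coe_prod, prod_eq_apply_zero_of_even h2 hβ]

theorem apply_zero_eq_one_of_coe_eq_monomialMatrix_one {G : Type*} [AddCommGroup G] [Fintype G]
    [DecidableEq G] (h2 : ∀ j : G, j + j = 0 → j = 0) {c : SpecialLinearGroup G ℤ} {β : G → ℤˣ}
    (hβ : ∀ j, β (-j) = β j) (hc : (c : Matrix G G ℤ) = monomialMatrix 1 β) : β 0 = 1 := by
  have hdet := c.2
  rw [hc, det_monomialMatrix_one_of_even h2 hβ] at hdet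
  exact Units.val_eq_one.1 hdet

-- `v⁻¹` is the product over `t` of the vectors equal to `1` at `t` and to `v t` elsewhere,
-- and each of these is `1` or a generator.
theorem mem_closure_of_prod_eq_one {ι : Type*} [Fintype ι] [DecidableEq ι] {v : ι → ℤˣ}
    (hv : ∏ j, v j = 1) :
    v ∈ Subgroup.closure (Set.range fun t j => if j = t then 1 else -1) := by
  set g : ι → ι → ℤˣ := fun t j => if j = t then 1 else v t
  have hg : ∀ t, g t ∈ Subgroup.closure (Set.range fun t j => if j = t then 1 else -1) := by
    intro t
    rcases Int.units_eq_one_or (v t) with h | h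
    · have : g t = 1 := by funext j; simp [g, h]
      rw [this]; exact Subgroup.one_mem _
    · exact Subgroup.subset_closure ⟨t, by funext j; simp [g, h]⟩
  have hprod : ∏ t, g t = v⁻¹ := by
    funext j
    have h := Finset.mul_prod_erase Finset.univ v (Finset.mem_univ j)
    rw [hv] at h
    rw [Finset.prod_apply, ← Finset.mul_prod_erase _ _ (Finset.mem_univ j)]
    simp only [g, if_pos rfl, one_mul, Pi.inv_apply]
    rw [Finset.prod_congr rfl fun t ht => if_neg (Finset.ne_of_mem_erase ht).symm]
    exact eq_inv_of_mul_eq_one_right h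
  rw [← inv_inv v, ← hprod]
  exact Subgroup.inv_mem _ (Subgroup.prod_mem _ fun t _ => hg t)

section EvenExtend

variable {n : ℕ}

-- The even sign vector that is `1` at `0` and `w t` at `±(t + 1)`.
def evenExtend (w : Fin n → ℤˣ) (j : Fin (2 * n + 1)) : ℤˣ :=
  if h : (j : ℕ) = 0 then 1 else w ⟨min (j : ℕ) (2 * n + 1 - j) - 1, by omega⟩

theorem evenExtend_zero (w : Fin n → ℤˣ) : evenExtend w 0 = 1 := by
  simp [evenExtend]

theorem evenExtend_neg (w : Fin n → ℤˣ) (j : Fin (2 * n + 1)) :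
    evenExtend w (-j) = evenExtend w j := by
  rcases eq_or_ne j 0 with rfl | hj
  · rw [neg_zero]
  have hj' : (j : ℕ) ≠ 0 := Fin.val_ne_zero_iff.2 hj
  have hneg : ((-j : Fin (2 * n + 1)) : ℕ) = 2 * n + 1 - j := by rw [Fin.val_neg, if_neg hj]
  simp only [evenExtend, hneg, hj', dite_false, show 2 * n + 1 - (j : ℕ) ≠ 0 by omega]
  congr 2
  omega

theorem evenExtend_apply_succ (w : Fin n → ℤˣ) (t : Fin n) :
    evenExtend w ⟨t + 1, by omega⟩ = w t := by
  simp only [evenExtend, Nat.add_one_ne_zero, dite_false]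
  congr
  omega

theorem evenExtend_restrict {β : Fin (2 * n + 1) → ℤˣ} (hβ : ∀ j, β (-j) = β j) (h0 : β 0 = 1) :
    evenExtend (fun t => β ⟨t + 1, by omega⟩) = β := by
  funext j
  rcases eq_or_ne j 0 with rfl | hj
  · rw [evenExtend_zero, h0]
  have hj' : (j : ℕ) ≠ 0 := Fin.val_ne_zero_iff.2 hj
  have hneg : ((-j : Fin (2 * n + 1)) : ℕ) = 2 * n + 1 - j := by rw [Fin.val_neg, if_neg hj]
  simp only [evenExtend, hj', dite_false]
  rcases le_total (j : ℕ) (2 * n + 1 - j) with h | h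
  · congr 1
    ext
    dsimp only
    omega
  · rw [← hβ j]
    congr 1
    ext
    dsimp only
    omega

end EvenExtend

open Matrix.SpecialLinearGroup

section Centralizer

variable {n : ℕ} {a b : Matrix.SpecialLinearGroup (Fin (2 * n + 1)) ℤ}

theorem closure_le_monomialSubgroup
    (ha : (a : Matrix (Fin (2 * n + 1)) (Fin (2 * n + 1)) ℤ) = Amat n)
    (hb : (b : Matrix (Fin (2 * n + 1)) (Fin (2 * n + 1)) ℤ) = Bmat n) :
    Subgroup.closure {a, b} ≤ monomialSubgroup (dihedralPerms _) := by
  rw [Subgroup.closure_le]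
  rintro x (rfl | rfl)
  · exact ⟨_, neg_mem_dihedralPerms, _, ha.trans (Amat_eq n)⟩
  · exact ⟨_, subRight_mem_dihedralPerms 1, _, hb.trans (Bmat_eq n)⟩

theorem mem_diagonalSubgroup_or_mul_inv_mem
    (ha : (a : Matrix (Fin (2 * n + 1)) (Fin (2 * n + 1)) ℤ) = Amat n)
    (hb : (b : Matrix (Fin (2 * n + 1)) (Fin (2 * n + 1)) ℤ) = Bmat n)
    {c : Matrix.SpecialLinearGroup (Fin (2 * n + 1)) ℤ}
    (hc : c ∈ Subgroup.closure {a, b} ⊓ Subgroup.centralizer {a}) :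
    c ∈ diagonalSubgroup ∨ c * a⁻¹ ∈ diagonalSubgroup := by
  have ha' := ha.trans (Amat_eq n)
  obtain ⟨σ, hσ, δ, hcδ⟩ := closure_le_monomialSubgroup ha hb hc.1
  have hcomm := congrArg Subtype.val (Subgroup.mem_centralizer_iff.1 hc.2 a rfl)
  simp only [coe_mul, ha', hcδ, monomialMatrix_mul, monomialMatrix_inj] at hcomm
  rcases eq_one_or_eq_neg_of_mem_dihedralPerms Fin.eq_zero_of_add_self_eq_zero hσ
    hcomm.1.symm with rfl | rfl
  · exact Or.inl (mem_diagonalSubgroup.2 ⟨δ, hcδ⟩)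
  · exact Or.inr (mem_diagonalSubgroup.2 ⟨_, by
      rw [coe_mul, hcδ, coe_inv_of_coe_eq_monomialMatrix ha', monomialMatrix_mul, mul_inv_cancel]⟩)

theorem Amat_mul_self (n : ℕ) :
    Amat n * Amat n = monomialMatrix 1 fun j => if j = 0 then 1 else -1 := by
  have hneg : Equiv.neg (Fin (2 * n + 1)) * Equiv.neg _ = 1 := by ext; simp
  rw [Amat_eq, monomialMatrix_mul, hneg]
  congr 1
  funext j
  rcases eq_or_ne j 0 with rfl | hj
  · simp [signA_zero]
  · simp [hj, signA_neg hj]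

theorem shift_mem_diagonalSigns (hb : (b : Matrix (Fin (2 * n + 1)) (Fin (2 * n + 1)) ℤ) = Bmat n)
    {v : Fin (2 * n + 1) → ℤˣ} (hv : v ∈ diagonalSigns (Subgroup.closure {a, b})) :
    (fun j => v (j + 1)) ∈ diagonalSigns (Subgroup.closure {a, b}) := by
  obtain ⟨g, hg, hgv⟩ := mem_diagonalSigns.1 hv
  have hb' := hb.trans (Bmat_eq n)
  have hbH : b ∈ Subgroup.closure {a, b} := Subgroup.subset_closure (by simp)
  refine mem_diagonalSigns.2 ⟨b * g * b⁻¹, mul_mem (mul_mem hbH hg) (inv_mem hbH), ?_⟩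
  rw [coe_mul, coe_mul, hb', hgv, coe_inv_of_coe_eq_monomialMatrix hb', monomialMatrix_mul,
    monomialMatrix_mul, mul_one, mul_inv_cancel]
  congr 1
  funext j
  simp

open Fin.CommRing in
theorem diagonalSubgroup_le_closure
    (ha : (a : Matrix (Fin (2 * n + 1)) (Fin (2 * n + 1)) ℤ) = Amat n)
    (hb : (b : Matrix (Fin (2 * n + 1)) (Fin (2 * n + 1)) ℤ) = Bmat n) :
    diagonalSubgroup ≤ Subgroup.closure {a, b} := by
  set W := diagonalSigns (Subgroup.closure {a, b})
  have haH : a ∈ Subgroup.closure {a, b} := Subgroup.subset_closure (by simp)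
  have hshift : ∀ k : ℕ,
      (fun j : Fin (2 * n + 1) => if j + (k : Fin (2 * n + 1)) = 0 then (1 : ℤˣ) else -1) ∈ W := by
    intro k
    induction k with
    | zero =>
      simpa using mem_diagonalSigns.2 ⟨a * a, mul_mem haH haH, by rw [coe_mul, ha, Amat_mul_self]⟩
    | succ k ih =>
      convert shift_mem_diagonalSigns hb ih using 4 with j
      push_cast
      abel
  have hgen : Subgroup.closure (Set.range fun t j => if j = t then 1 else -1) ≤ W := by
    rw [Subgroup.closure_le]
    rintro _ ⟨t, rfl⟩
    convert hshift (-t).val using 4 with j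
    simp [add_neg_eq_zero]
  intro c hc
  obtain ⟨v, hcv⟩ := mem_diagonalSubgroup.1 hc
  have hprod : ∏ j, v j = 1 := by
    have hdet := c.2
    rw [hcv, monomialMatrix_one, det_diagonal, ← Units.coe_prod] at hdet
    exact Units.val_eq_one.1 hdet
  obtain ⟨g, hg, hgv⟩ := mem_diagonalSigns.1 (hgen (mem_closure_of_prod_eq_one hprod))
  rwa [show c = g from Subtype.ext (hcv.trans hgv.symm)]

theorem not_mem_diagonalSubgroup (hn : 0 < n)
    (ha : (a : Matrix (Fin (2 * n + 1)) (Fin (2 * n + 1)) ℤ) = Amat n) :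
    a ∉ diagonalSubgroup := by
  intro h
  obtain ⟨v, hv⟩ := mem_diagonalSubgroup.1 h
  rw [ha, Amat_eq, monomialMatrix_inj] at hv
  have h1 : (1 : Fin (2 * n + 1)) = 0 := Fin.eq_zero_of_add_self_eq_zero 1
    (eq_neg_iff_add_eq_zero.1 (Equiv.ext_iff.1 hv.1 1).symm)
  exact (by omega : 2 * n + 1 ≠ 1) (Fin.one_eq_zero_iff.1 h1)

theorem mem_diagonalSubgroup_inf_centralizer_iff
    (ha : (a : Matrix (Fin (2 * n + 1)) (Fin (2 * n + 1)) ℤ) = Amat n)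
    {c : Matrix.SpecialLinearGroup (Fin (2 * n + 1)) ℤ} :
    c ∈ diagonalSubgroup ⊓ Subgroup.centralizer {a} ↔
      ∃ β : Fin (2 * n + 1) → ℤˣ, (∀ j, β (-j) = β j) ∧
        (c : Matrix (Fin (2 * n + 1)) (Fin (2 * n + 1)) ℤ) = monomialMatrix 1 β := by
  have ha' := ha.trans (Amat_eq n)
  rw [Subgroup.mem_inf, mem_diagonalSubgroup, Subgroup.mem_centralizer_singleton_iff]
  constructor
  · rintro ⟨⟨β, hβ⟩, hcomm⟩
    have hcomm' := congrArg Subtype.val hcomm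
    rw [coe_mul, coe_mul, hβ, ha'] at hcomm'
    exact ⟨β, (monomialMatrix_one_commute_iff _ _ _).1 hcomm', hβ⟩
  · rintro ⟨β, heven, hβ⟩
    refine ⟨⟨β, hβ⟩, Subtype.ext ?_⟩
    rw [coe_mul, coe_mul, hβ, ha']
    exact (monomialMatrix_one_commute_iff _ _ _).2 heven

theorem card_diagonalSubgroup_inf_centralizer
    (ha : (a : Matrix (Fin (2 * n + 1)) (Fin (2 * n + 1)) ℤ) = Amat n) :
    Nat.card ↥(diagonalSubgroup ⊓ Subgroup.centralizer {a}) = 2 ^ n := by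
  let F : (Fin n → ℤˣ) → ↥(diagonalSubgroup ⊓ Subgroup.centralizer {a}) := fun w =>
    ⟨⟨monomialMatrix 1 (evenExtend w), by
        rw [det_monomialMatrix_one_of_even Fin.eq_zero_of_add_self_eq_zero (evenExtend_neg w),
          evenExtend_zero, Units.val_one]⟩,
      (mem_diagonalSubgroup_inf_centralizer_iff ha).2 ⟨_, evenExtend_neg w, rfl⟩⟩
  have hF : Function.Bijective F := by
    refine ⟨fun w w' h => ?_, fun c => ?_⟩
    · have h' : evenExtend w = evenExtend w' :=
        (monomialMatrix_inj.1 (Subtype.ext_iff.1 (Subtype.ext_iff.1 h))).2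
      funext t
      rw [← evenExtend_apply_succ w t, h', evenExtend_apply_succ]
    · obtain ⟨β, hβ, hc⟩ := (mem_diagonalSubgroup_inf_centralizer_iff ha).1 c.2
      have h0 := apply_zero_eq_one_of_coe_eq_monomialMatrix_one
        Fin.eq_zero_of_add_self_eq_zero hβ hc
      refine ⟨fun t => β ⟨t + 1, by omega⟩, Subtype.ext (Subtype.ext ?_)⟩
      simp only [F, evenExtend_restrict hβ h0, hc]
  rw [← Nat.card_eq_of_bijective F hF, Nat.card_eq_fintype_card, Fintype.card_fun,
    Fintype.card_units_int, Fintype.card_fin]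

theorem of_mul_abs_Amat (u : Fin (2 * n + 1) → ℤˣ) :
    (Matrix.of fun i j => (u j : ℤ) * |Amat n i j|) = monomialMatrix (Equiv.neg _) u := by
  ext i j
  rw [Amat_eq]
  simp only [monomialMatrix, Matrix.of_apply]
  split_ifs
  · rw [Int.isUnit_iff_abs_eq.1 (Units.isUnit _), mul_one]
  · rw [abs_zero, mul_zero]

theorem exists_int_signs_iff (c : Matrix.SpecialLinearGroup (Fin (2 * n + 1)) ℤ) :
    (∃ δ : Fin (2 * n + 1) → ℤ,
      (∀ j, δ j = 1 ∨ δ j = -1) ∧ δ 0 = 1 ∧ (∀ j, j ≠ 0 → δ (-j) = -δ j) ∧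
      (c : Matrix (Fin (2 * n + 1)) (Fin (2 * n + 1)) ℤ) =
        Matrix.of fun i j => δ j * |Amat n i j|) ↔
    ∃ u : Fin (2 * n + 1) → ℤˣ, u 0 = 1 ∧ (∀ j, j ≠ 0 → u (-j) = -u j) ∧
      (c : Matrix (Fin (2 * n + 1)) (Fin (2 * n + 1)) ℤ) = monomialMatrix (Equiv.neg _) u := by
  constructor
  · rintro ⟨δ, hpm, h0, hodd, hc⟩
    choose u hu using fun j => Int.isUnit_iff.2 (hpm j)
    obtain rfl : δ = fun j => (u j : ℤ) := funext fun j => (hu j).symm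
    exact ⟨u, Units.val_eq_one.1 h0, fun j hj => Units.ext (by simpa using hodd j hj),
      hc.trans (of_mul_abs_Amat u)⟩
  · rintro ⟨u, h0, hodd, hc⟩
    refine ⟨fun j => u j, fun j => ?_, by simp [h0], fun j hj => by simp [hodd j hj],
      hc.trans (of_mul_abs_Amat u).symm⟩
    rcases Int.units_eq_one_or (u j) with h | h <;> simp [h]

theorem exists_odd_signs_iff
    (ha : (a : Matrix (Fin (2 * n + 1)) (Fin (2 * n + 1)) ℤ) = Amat n)
    (c : Matrix.SpecialLinearGroup (Fin (2 * n + 1)) ℤ) :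
    (∃ u : Fin (2 * n + 1) → ℤˣ, u 0 = 1 ∧ (∀ j, j ≠ 0 → u (-j) = -u j) ∧
      (c : Matrix (Fin (2 * n + 1)) (Fin (2 * n + 1)) ℤ) = monomialMatrix (Equiv.neg _) u) ↔
    c * a⁻¹ ∈ diagonalSubgroup ⊓ Subgroup.centralizer {a} := by
  have ha' := ha.trans (Amat_eq n)
  rw [mem_diagonalSubgroup_inf_centralizer_iff ha]
  constructor
  · rintro ⟨u, h0, hodd, hc⟩
    have heven : ∀ j, u (-j) * signA n (-j) = u j * signA n j := by
      intro j
      rcases eq_or_ne j 0 with rfl | hj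
      · rw [neg_zero]
      · rw [hodd j hj, signA_neg hj, neg_mul_neg]
    refine ⟨fun j => u j * signA n j, heven, ?_⟩
    rw [coe_mul, hc, coe_inv_of_coe_eq_monomialMatrix ha', monomialMatrix_mul, mul_inv_cancel]
    congr 1
    funext j
    simp only [Equiv.Perm.inv_def, Equiv.neg_symm, Equiv.neg_apply, Int.units_inv_eq_self]
    exact heven j
  · rintro ⟨β, hβ, hc⟩
    have h0 := apply_zero_eq_one_of_coe_eq_monomialMatrix_one
      Fin.eq_zero_of_add_self_eq_zero hβ hc
    refine ⟨fun j => β j * signA n j, by simp [h0, signA_zero], fun j hj => ?_, ?_⟩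
    · simp only [hβ, signA_neg hj, mul_neg]
    · have hca : c = c * a⁻¹ * a := (inv_mul_cancel_right c a).symm
      rw [hca, coe_mul, hc, ha', monomialMatrix_mul, one_mul]
      congr 1
      funext j
      simp only [Equiv.neg_apply, hβ]

theorem mem_closure_inf_centralizer_iff
    (ha : (a : Matrix (Fin (2 * n + 1)) (Fin (2 * n + 1)) ℤ) = Amat n)
    (hb : (b : Matrix (Fin (2 * n + 1)) (Fin (2 * n + 1)) ℤ) = Bmat n)
    (c : Matrix.SpecialLinearGroup (Fin (2 * n + 1)) ℤ) :
    c ∈ Subgroup.closure {a, b} ⊓ Subgroup.centralizer {a} ↔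
      c ∈ diagonalSubgroup ⊓ Subgroup.centralizer {a} ∨
        c * a⁻¹ ∈ diagonalSubgroup ⊓ Subgroup.centralizer {a} := by
  have haZ : a ∈ Subgroup.centralizer {a} := Subgroup.mem_centralizer_singleton_iff.2 rfl
  have haC : a ∈ Subgroup.closure {a, b} ⊓ Subgroup.centralizer {a} :=
    ⟨Subgroup.subset_closure (by simp), haZ⟩
  have hDC := inf_le_inf_right (Subgroup.centralizer {a}) (diagonalSubgroup_le_closure ha hb)
  constructor
  · intro hc
    rcases mem_diagonalSubgroup_or_mul_inv_mem ha hb hc with h | h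
    · exact Or.inl ⟨h, hc.2⟩
    · exact Or.inr ⟨h, Subgroup.mul_mem _ hc.2 (Subgroup.inv_mem _ haZ)⟩
  · rintro (h | h)
    · exact hDC h
    · simpa using mul_mem (hDC h) haC

theorem closure_mul_inv_mem_eq
    (ha : (a : Matrix (Fin (2 * n + 1)) (Fin (2 * n + 1)) ℤ) = Amat n)
    (hb : (b : Matrix (Fin (2 * n + 1)) (Fin (2 * n + 1)) ℤ) = Bmat n) :
    Subgroup.closure {c | c * a⁻¹ ∈ diagonalSubgroup ⊓ Subgroup.centralizer {a}} =
      Subgroup.closure {a, b} ⊓ Subgroup.centralizer {a} := by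
  set D := diagonalSubgroup ⊓ Subgroup.centralizer {a}
  apply le_antisymm
  · rw [Subgroup.closure_le]
    intro c hc
    exact (mem_closure_inf_centralizer_iff ha hb c).2 (Or.inr hc)
  · intro c hc
    rcases (mem_closure_inf_centralizer_iff ha hb c).1 hc with h | h
    · have hca : c * a ∈ {c | c * a⁻¹ ∈ D} := by
        show c * a * a⁻¹ ∈ D
        rwa [mul_inv_cancel_right]
      have haS : a ∈ {c | c * a⁻¹ ∈ D} := by simp [one_mem]
      simpa using mul_mem (Subgroup.subset_closure hca) (inv_mem (Subgroup.subset_closure haS))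
    · exact Subgroup.subset_closure h

theorem card_closure_inf_centralizer (hn : 0 < n)
    (ha : (a : Matrix (Fin (2 * n + 1)) (Fin (2 * n + 1)) ℤ) = Amat n)
    (hb : (b : Matrix (Fin (2 * n + 1)) (Fin (2 * n + 1)) ℤ) = Bmat n) :
    Nat.card ↥(Subgroup.closure {a, b} ⊓ Subgroup.centralizer {a}) = 2 ^ (n + 1) := by
  set C := Subgroup.closure {a, b} ⊓ Subgroup.centralizer {a}
  set D := diagonalSubgroup ⊓ Subgroup.centralizer {a}
  have hDC : D ≤ C := fun c hc => (mem_closure_inf_centralizer_iff ha hb c).2 (Or.inl hc)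
  have haC : a⁻¹ ∈ C :=
    C.inv_mem ((mem_closure_inf_centralizer_iff ha hb a).2 (Or.inr (by simp [one_mem])))
  have haD : a⁻¹ ∉ D := fun h => not_mem_diagonalSubgroup hn ha (by simpa using h.1)
  have hindex : (D.subgroupOf C).index = 2 := by
    refine Subgroup.index_eq_two_iff.2 ⟨⟨a⁻¹, haC⟩, fun x => ?_⟩
    simp only [Subgroup.mem_subgroupOf, Subgroup.coe_mul]
    rcases (mem_closure_inf_centralizer_iff ha hb x).1 x.2 with h | h
    · refine Or.inr ⟨h, fun h' => haD ?_⟩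
      rw [← inv_mul_cancel_left (x : Matrix.SpecialLinearGroup (Fin (2 * n + 1)) ℤ) a⁻¹]
      exact D.mul_mem (D.inv_mem h) h'
    · refine Or.inl ⟨h, fun h' => haD ?_⟩
      rw [← inv_mul_cancel_left (x : Matrix.SpecialLinearGroup (Fin (2 * n + 1)) ℤ) a⁻¹]
      exact D.mul_mem (D.inv_mem h') h
  rw [← Subgroup.card_mul_index (D.subgroupOf C), hindex,
    Nat.card_congr (Subgroup.subgroupOfEquivOfLe hDC).toEquiv,
    card_diagonalSubgroup_inf_centralizer ha, pow_succ]

end Centralizer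

/-- The centralizer of `a` in `G_{2n+1}` has order `2^{n+1}`, and is generated by the
elements `(1, ε₂(2n+1), …, ε_{n+1}(n+2), −ε_{n+1}(n+1), …, −ε₂(2))` with `ε_j = ±1`,
i.e. the signed permutation matrices with the same underlying permutation as `a`,
column signs `δ` satisfying `δ₀ = 1` and `δ_{-j} = −δ_j` for `j ≠ 0`. -/
theorem centralizer_of_a (n : ℕ) (hn : 0 < n)
    (a b : Matrix.SpecialLinearGroup (Fin (2*n+1)) ℤ)
    (ha : (a : Matrix (Fin (2*n+1)) (Fin (2*n+1)) ℤ) = Amat n)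
    (hb : (b : Matrix (Fin (2*n+1)) (Fin (2*n+1)) ℤ) = Bmat n) :
    Subgroup.closure {c : Matrix.SpecialLinearGroup (Fin (2*n+1)) ℤ |
        ∃ δ : Fin (2*n+1) → ℤ,
          (∀ j, δ j = 1 ∨ δ j = -1) ∧ δ 0 = 1 ∧ (∀ j, j ≠ 0 → δ (-j) = -δ j) ∧
          (c : Matrix (Fin (2*n+1)) (Fin (2*n+1)) ℤ)
            = Matrix.of fun i j => δ j * |Amat n i j|}
      = Subgroup.closure {a, b} ⊓ Subgroup.centralizer {a} ∧
    Nat.card ↥(Subgroup.closure {a, b} ⊓ Subgroup.centralizer {a}) = 2^(n+1) := by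
  refine ⟨?_, card_closure_inf_centralizer hn ha hb⟩
  convert closure_mul_inv_mem_eq ha hb using 2
  ext c
  exact (exists_int_signs_iff c).trans (exists_odd_signs_iff ha c)
end

section
/- Define ρ : R̃_{2n+1} → R̃_{2n+1} by ρ(Hu) = H c u where c is the diagonal sign matrix diag(−1,…,−1, 1, …, 1) with −1 in the first n+1 positions and +1 elsewhere if n is odd, and with +1 in position 1, −1 in positions 2,…,n+1, and +1 elsewhere if n is even. Then ρ is a well-defined good involution on R̃_{2n+1}: ρ² = id, ρ(Hu ◁ Hv) = ρ(Hu) ◁ Hv, and Hu ◁ ρ(Hv) is the inverse of the right action of Hv (i.e. (Hu ◁ ρ(Hv)) ◁ Hv = Hu). -/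
/-- The diagonal sign matrix defining the good involution `ρ` on `R̃_{2n+1}`:
`diag(−1,…,−1 (first n+1 entries), 1,…,1)` for odd `n`, and
`diag(1, −1,…,−1 (entries 2,…,n+1), 1,…,1)` for even `n` (0-based indices). -/
def Cmat (n : ℕ) : Matrix (Fin (2*n+1)) (Fin (2*n+1)) ℤ := fun i j =>
  if i = j then (if (i : ℕ) ≤ n ∧ (Odd n ∨ (i : ℕ) ≠ 0) then -1 else 1) else 0

/-- The group `G_{2n+1}` generated by `a` and `b`. -/
def Gp (n : ℕ) (a b : Matrix.SpecialLinearGroup (Fin (2*n+1)) ℤ) :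
    Subgroup (Matrix.SpecialLinearGroup (Fin (2*n+1)) ℤ) :=
  Subgroup.closure {a, b}

theorem mem_a (n : ℕ) (a b : Matrix.SpecialLinearGroup (Fin (2*n+1)) ℤ) : a ∈ Gp n a b :=
  Subgroup.subset_closure (Set.mem_insert _ _)

/-- The subgroup `H = C(a)` of `G_{2n+1}`. -/
def Hc (n : ℕ) (a b : Matrix.SpecialLinearGroup (Fin (2*n+1)) ℤ) : Subgroup ↥(Gp n a b) :=
  (Subgroup.centralizer {a}).subgroupOf (Gp n a b)

open Matrix QuotientGroup

section CosetQuandle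

variable {G : Type*} [Group G]

theorem mem_normalizer_centralizer_singleton_of_conj_eq_inv {a c : G}
    (hca : c * a * c⁻¹ = a⁻¹) : c ∈ Subgroup.normalizer (Subgroup.centralizer {a}) := by
  refine Subgroup.mem_normalizer_iff.2 fun h => ?_
  simp only [Subgroup.mem_centralizer_singleton_iff, ← commute_iff_eq]
  rw [← Commute.conj_iff c, hca, Commute.inv_right_iff, Commute.symm_iff, Commute.symm_iff]

theorem rightRel_mul_left_of_mem_normalizer {H : Subgroup G} {c u v : G}
    (hc : c ∈ Subgroup.normalizer H) (huv : rightRel H u v) : rightRel H (c * u) (c * v) := by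
  rw [rightRel_apply] at huv ⊢
  simpa [mul_assoc] using (Subgroup.mem_normalizer_iff.1 hc _).1 huv

theorem exists_goodInvolution_rightCosets {H : Subgroup G} {a c : G}
    (hc : c * c = 1) (hca : c * a * c⁻¹ = a⁻¹) (hcH : c ∈ Subgroup.normalizer H) :
    ∃ ρ : Quotient (rightRel H) → Quotient (rightRel H),
      (∀ u : G, ρ (Quotient.mk (rightRel H) u) = Quotient.mk (rightRel H) (c * u)) ∧
      ρ ∘ ρ = id ∧
      (∀ u v : G, ρ (Quotient.mk (rightRel H) (u * v⁻¹ * a * v))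
          = Quotient.mk (rightRel H) ((c * u) * v⁻¹ * a * v)) ∧
      (∀ u v : G, Quotient.mk (rightRel H) ((u * (c * v)⁻¹ * a * (c * v)) * v⁻¹ * a * v)
          = Quotient.mk (rightRel H) u) := by
  have hc_inv : c⁻¹ = c := inv_eq_of_mul_eq_one_right hc
  refine ⟨Quotient.map (c * ·) fun u v => rightRel_mul_left_of_mem_normalizer hcH,
    fun u => rfl, ?_, fun u v => ?_, fun u v => ?_⟩
  · funext q
    induction q using Quotient.ind
    simp [Quotient.map_mk, ← mul_assoc, hc]
  · simp [Quotient.map_mk, mul_assoc]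
  · congr 1
    calc u * (c * v)⁻¹ * a * (c * v) * v⁻¹ * a * v = u * v⁻¹ * (c * a * c⁻¹) * a * v := by
          simp [hc_inv, mul_assoc]
      _ = u := by rw [hca]; group

end CosetQuandle

section SignedInvolutionMatrix

variable {ι R : Type*} [Fintype ι] [DecidableEq ι] [CommRing R]

theorem diagonal_mul_mul_diagonal_mul_eq_diagonal {σ : ι → ι} (hσ : Function.Involutive σ)
    {ε : ι → R} {M : Matrix ι ι R} (hM : ∀ i j, M i j = if i = σ j then ε j else 0)
    (d : ι → R) :
    diagonal d * M * diagonal d * M = diagonal fun k => d k * d (σ k) * ε k * ε (σ k) := by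
  ext i k
  rw [mul_apply, Finset.sum_eq_single (σ k)]
  · rw [mul_diagonal, diagonal_mul, hM, hM, diagonal_apply, if_pos rfl, hσ]
    split_ifs with h
    · subst h; ring
    · ring
  · intro j _ hj
    rw [hM, if_neg hj, mul_zero]
  · simp

end SignedInvolutionMatrix

def aSign (n : ℕ) (j : Fin (2*n+1)) : ℤ := if (j : ℕ) ≤ n then 1 else -1

def cSign (n : ℕ) (i : Fin (2*n+1)) : ℤ := if (i : ℕ) ≤ n ∧ (Odd n ∨ (i : ℕ) ≠ 0) then -1 else 1

theorem Amat_apply (n : ℕ) (i j : Fin (2*n+1)) : Amat n i j = if i = -j then aSign n j else 0 := by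
  simp only [Amat, aSign, Fin.ext_iff, Fin.val_neg, Fin.val_zero]
  split_ifs <;> omega

theorem Cmat_eq_diagonal (n : ℕ) : Cmat n = diagonal (cSign n) := by
  ext i j
  simp only [Cmat, diagonal_apply, cSign]

theorem cSign_mul_self (n : ℕ) (i : Fin (2*n+1)) : cSign n i * cSign n i = 1 := by
  unfold cSign; split_ifs <;> rfl

theorem cSign_mul_cSign_neg_mul_aSign_mul_aSign_neg (n : ℕ) (k : Fin (2*n+1)) :
    cSign n k * cSign n (-k) * aSign n k * aSign n (-k) = 1 := by
  simp only [cSign, aSign, Fin.val_neg, Fin.ext_iff, Fin.val_zero]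
  split_ifs <;> first | rfl | omega | tauto

theorem Cmat_mul_self (n : ℕ) : Cmat n * Cmat n = 1 := by
  rw [Cmat_eq_diagonal, diagonal_mul_diagonal, ← diagonal_one]
  exact congrArg diagonal (funext (cSign_mul_self n))

theorem Cmat_mul_Amat_mul_Cmat_mul_Amat (n : ℕ) : Cmat n * Amat n * Cmat n * Amat n = 1 := by
  rw [Cmat_eq_diagonal, diagonal_mul_mul_diagonal_mul_eq_diagonal neg_involutive (Amat_apply n),
    ← diagonal_one]
  exact congrArg diagonal (funext (cSign_mul_cSign_neg_mul_aSign_mul_aSign_neg n))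

theorem good_involution_tilde_R_general (n : ℕ)
    (a b : Matrix.SpecialLinearGroup (Fin (2*n+1)) ℤ)
    (ha : (a : Matrix (Fin (2*n+1)) (Fin (2*n+1)) ℤ) = Amat n)
    (c : ↥(Gp n a b))
    (hc : ((c : Matrix.SpecialLinearGroup (Fin (2*n+1)) ℤ) :
      Matrix (Fin (2*n+1)) (Fin (2*n+1)) ℤ) = Cmat n) :
    ∃ ρ : Quotient (QuotientGroup.rightRel (Hc n a b)) →
        Quotient (QuotientGroup.rightRel (Hc n a b)),
      (∀ u : ↥(Gp n a b),
        ρ (Quotient.mk (QuotientGroup.rightRel (Hc n a b)) u)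
          = Quotient.mk (QuotientGroup.rightRel (Hc n a b)) (c * u)) ∧
      ρ ∘ ρ = id ∧
      (∀ u v : ↥(Gp n a b),
        ρ (Quotient.mk (QuotientGroup.rightRel (Hc n a b))
            (u * v⁻¹ * ⟨a, mem_a n a b⟩ * v))
          = Quotient.mk (QuotientGroup.rightRel (Hc n a b))
            ((c * u) * v⁻¹ * ⟨a, mem_a n a b⟩ * v)) ∧
      (∀ u v : ↥(Gp n a b),
        Quotient.mk (QuotientGroup.rightRel (Hc n a b))
            ((u * (c * v)⁻¹ * ⟨a, mem_a n a b⟩ * (c * v)) * v⁻¹ * ⟨a, mem_a n a b⟩ * v)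
          = Quotient.mk (QuotientGroup.rightRel (Hc n a b)) u) := by
  set a' : ↥(Gp n a b) := ⟨a, mem_a n a b⟩
  have hc2 : c * c = 1 := Subtype.ext <| Subtype.ext <| by simp [hc, Cmat_mul_self]
  have hcaca : c * a' * c * a' = 1 := Subtype.ext <| Subtype.ext <| by
    simp [a', ha, hc, Cmat_mul_Amat_mul_Cmat_mul_Amat]
  have hca : c * a' * c⁻¹ = a'⁻¹ := by
    rw [inv_eq_of_mul_eq_one_right hc2]
    exact eq_inv_of_mul_eq_one_left hcaca
  have hcH : c ∈ Subgroup.normalizer (Hc n a b) :=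
    Subgroup.le_normalizer_comap (Gp n a b).subtype <|
      mem_normalizer_centralizer_singleton_of_conj_eq_inv (congrArg Subtype.val hca)
  exact exists_goodInvolution_rightCosets hc2 hca hcH

/-- `ρ(Hu) = H c u` is a well-defined good involution on the coset quandle
`R̃_{2n+1} = (G_{2n+1}, C(a), a)` with operation `Hu ◁ Hv = H u v⁻¹ a v`:
`ρ² = id`, `ρ(Hu ◁ Hv) = ρ(Hu) ◁ Hv`, and `(Hu ◁ ρ(Hv)) ◁ Hv = Hu`. -/
theorem good_involution_tilde_R (n : ℕ) (hn : 0 < n)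
    (a b : Matrix.SpecialLinearGroup (Fin (2*n+1)) ℤ)
    (ha : (a : Matrix (Fin (2*n+1)) (Fin (2*n+1)) ℤ) = Amat n)
    (hb : (b : Matrix (Fin (2*n+1)) (Fin (2*n+1)) ℤ) = Bmat n)
    (c : ↥(Gp n a b))
    (hc : ((c : Matrix.SpecialLinearGroup (Fin (2*n+1)) ℤ) :
      Matrix (Fin (2*n+1)) (Fin (2*n+1)) ℤ) = Cmat n) :
    ∃ ρ : Quotient (QuotientGroup.rightRel (Hc n a b)) →
        Quotient (QuotientGroup.rightRel (Hc n a b)),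
      (∀ u : ↥(Gp n a b),
        ρ (Quotient.mk (QuotientGroup.rightRel (Hc n a b)) u)
          = Quotient.mk (QuotientGroup.rightRel (Hc n a b)) (c * u)) ∧
      ρ ∘ ρ = id ∧
      (∀ u v : ↥(Gp n a b),
        ρ (Quotient.mk (QuotientGroup.rightRel (Hc n a b))
            (u * v⁻¹ * ⟨a, mem_a n a b⟩ * v))
          = Quotient.mk (QuotientGroup.rightRel (Hc n a b))
            ((c * u) * v⁻¹ * ⟨a, mem_a n a b⟩ * v)) ∧
      (∀ u v : ↥(Gp n a b),
        Quotient.mk (QuotientGroup.rightRel (Hc n a b))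
            ((u * (c * v)⁻¹ * ⟨a, mem_a n a b⟩ * (c * v)) * v⁻¹ * ⟨a, mem_a n a b⟩ * v)
          = Quotient.mk (QuotientGroup.rightRel (Hc n a b)) u) :=
  good_involution_tilde_R_general n a b ha c hc
end

section
/- In R̃_{2n+1} with the good involution ρ of the previous statement, the key conjugation identity c a c = a⁻¹ holds in G_{2n+1}, where c is the diagonal sign matrix defining ρ (c = diag(ε,−1,…,−1,1,…,1) with −1 in positions 2,…,n+1 and ε = −1 if n odd, ε = +1 if n even). -/
open Matrix

section SignedPerm

variable {ι R : Type*} [DecidableEq ι] [NonAssocSemiring R]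

def signedPermMatrix (σ : Equiv.Perm ι) (s : ι → R) : Matrix ι ι R :=
  of fun i j => if i = σ j then s j else 0

theorem signedPermMatrix_mul_signedPermMatrix [Fintype ι] (σ τ : Equiv.Perm ι) (s t : ι → R) :
    signedPermMatrix σ s * signedPermMatrix τ t =
      signedPermMatrix (σ * τ) (fun j => s (τ j) * t j) := by
  ext i j
  simp only [signedPermMatrix, mul_apply, of_apply, ite_mul, zero_mul, mul_ite, mul_zero,
    Finset.sum_ite_eq', Finset.mem_univ, if_true, Equiv.Perm.coe_mul, Function.comp_apply]
  rfl

theorem diagonal_mul_signedPermMatrix [Fintype ι] (d : ι → R) (σ : Equiv.Perm ι) (s : ι → R) :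
    diagonal d * signedPermMatrix σ s = signedPermMatrix σ (fun j => d (σ j) * s j) := by
  ext i j
  by_cases h : i = σ j <;> simp [signedPermMatrix, h]

theorem signedPermMatrix_one_one : signedPermMatrix (1 : Equiv.Perm ι) (1 : ι → R) = 1 := by
  ext i j
  simp only [signedPermMatrix, of_apply, one_apply, Equiv.Perm.coe_one, id_eq, Pi.one_apply]
  rfl

theorem signedPermMatrix_mul_self [Fintype ι] {σ : Equiv.Perm ι} (hσ : Function.Involutive σ)
    {s : ι → R} (hs : ∀ j, s (σ j) * s j = 1) :
    signedPermMatrix σ s * signedPermMatrix σ s = 1 := by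
  have hσσ : σ * σ = 1 := Equiv.ext hσ
  rw [signedPermMatrix_mul_signedPermMatrix, hσσ, funext hs]
  exact signedPermMatrix_one_one

end SignedPerm

theorem Amat_eq_signedPermMatrix (n : ℕ) :
    Amat n =
      signedPermMatrix (Equiv.neg _) (fun j : Fin (2*n+1) => if (j : ℕ) ≤ n then 1 else -1) := by
  ext i j
  simp only [Amat, signedPermMatrix, of_apply, Equiv.neg_apply, Fin.ext_iff, Fin.val_neg,
    Fin.val_zero]
  split_ifs <;> first | rfl | omega

theorem Cmat_eq_diagonal_s15 (n : ℕ) :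
    Cmat n =
      diagonal fun i : Fin (2*n+1) => if (i : ℕ) ≤ n ∧ (Odd n ∨ (i : ℕ) ≠ 0) then -1 else 1 := by
  ext i j
  by_cases h : i = j <;> simp [Cmat, h]

theorem Cmat_mul_Amat (n : ℕ) :
    Cmat n * Amat n =
      signedPermMatrix (Equiv.neg _) (fun j : Fin (2*n+1) => if j = 0 ∧ Odd n then -1 else 1) := by
  rw [Cmat_eq_diagonal_s15, Amat_eq_signedPermMatrix, diagonal_mul_signedPermMatrix]
  congr 1
  funext j
  simp only [Equiv.neg_apply, Fin.ext_iff, Fin.val_neg, Fin.val_zero]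
  split_ifs <;> first | rfl | omega | simp_all

theorem Cmat_mul_Amat_mul_self (n : ℕ) : Cmat n * Amat n * (Cmat n * Amat n) = 1 := by
  rw [Cmat_mul_Amat]
  refine signedPermMatrix_mul_self neg_involutive fun j => ?_
  simp only [Equiv.neg_apply, neg_eq_zero]
  split_ifs <;> norm_num

theorem conj_a_by_c_general (n : ℕ)
    (a c : Matrix.SpecialLinearGroup (Fin (2*n+1)) ℤ)
    (ha : (a : Matrix (Fin (2*n+1)) (Fin (2*n+1)) ℤ) = Amat n)
    (hc : (c : Matrix (Fin (2*n+1)) (Fin (2*n+1)) ℤ) = Cmat n) :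
    c * a * c = a⁻¹ := by
  have hca : ((c * a * (c * a) : Matrix.SpecialLinearGroup (Fin (2*n+1)) ℤ) :
      Matrix (Fin (2*n+1)) (Fin (2*n+1)) ℤ) = 1 := by
    rw [Matrix.SpecialLinearGroup.coe_mul, Matrix.SpecialLinearGroup.coe_mul, hc, ha]
    exact Cmat_mul_Amat_mul_self n
  rw [← mul_assoc] at hca
  exact eq_inv_of_mul_eq_one_left (Subtype.ext hca)

/-- The key conjugation identity `c a c = a⁻¹` holds in `G_{2n+1}`. -/
theorem conj_a_by_c (n : ℕ) (hn : 0 < n)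
    (a c : Matrix.SpecialLinearGroup (Fin (2*n+1)) ℤ)
    (ha : (a : Matrix (Fin (2*n+1)) (Fin (2*n+1)) ℤ) = Amat n)
    (hc : (c : Matrix (Fin (2*n+1)) (Fin (2*n+1)) ℤ) = Cmat n) :
    c * a * c = a⁻¹ :=
  conj_a_by_c_general n a c ha hc
end
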